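/- arXiv:2211.03339 — 2 statements merged into one kernel-verified Lean document; each statement's English description precedes it below -/
import Mathlib

section
/- Let R = (r_{pq}) ∈ ℝ^{n×n} be an invertible upper triangular matrix. Then for all indices i < j, |r_{ij}| ≤ ‖R⁻¹ − Rᵀ‖ ≤ ‖I − RᵀR‖ · ‖R⁻¹‖. -/
open Matrix

noncomputable def specNorm {m n : ℕ} (A : Matrix (Fin m) (Fin n) ℝ) : ℝ :=
  ‖LinearMap.toContinuousLinearMap (Matrix.toEuclideanLin A)‖

noncomputable def frobNorm {m n : ℕ} (A : Matrix (Fin m) (Fin n) ℝ) : ℝ :=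
  Real.sqrt (∑ p, ∑ q, (A p q) ^ 2)

def offDiag {n : ℕ} (A : Matrix (Fin n) (Fin n) ℝ) : Matrix (Fin n) (Fin n) ℝ :=
  fun p q => if p = q then 0 else A p q

def jacobiRot {n : ℕ} (i j : Fin n) (c s : ℝ) : Matrix (Fin n) (Fin n) ℝ :=
  fun p q =>
    if p = i ∧ q = i then c
    else if p = j ∧ q = j then c
    else if p = i ∧ q = j then s
    else if p = j ∧ q = i then -s
    else if p = q then 1 else 0

open Classical in
noncomputable def eigValsDesc {n : ℕ} (A : Matrix (Fin n) (Fin n) ℝ) : Fin n → ℝ :=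
  if hA : A.IsHermitian then
    fun k => (hA.eigenvalues ∘ Tuple.sort hA.eigenvalues) k.rev
  else 0

noncomputable def singValsDesc {m n : ℕ} (A : Matrix (Fin m) (Fin n) ℝ) : Fin n → ℝ :=
  fun k => Real.sqrt (eigValsDesc (Aᵀ * A) k)

/-! Since `R⁻¹` is again upper triangular, `(R⁻¹ - Rᵀ) j i = -R i j` for `i < j`, and an entry is
bounded by the spectral norm. The second inequality is submultiplicativity applied to the
identity `R⁻¹ - Rᵀ = (1 - Rᵀ R) R⁻¹`. -/

open scoped Matrix.Norms.L2Operator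

theorem specNorm_eq_l2_opNorm {m n : ℕ} (A : Matrix (Fin m) (Fin n) ℝ) : specNorm A = ‖A‖ :=
  rfl

theorem abs_apply_le_specNorm {m n : ℕ} (A : Matrix (Fin m) (Fin n) ℝ) (p : Fin m) (q : Fin n) :
    |A p q| ≤ specNorm A := by
  have hcol : A *ᵥ (EuclideanSpace.single q (1 : ℝ)).ofLp = fun r => A r q := by
    ext r
    simp [mulVec, dotProduct, PiLp.single_apply]
  calc |A p q| = ‖(EuclideanSpace.equiv (Fin m) ℝ).symm (fun r => A r q) p‖ := rfl
    _ ≤ ‖(EuclideanSpace.equiv (Fin m) ℝ).symm (fun r => A r q)‖ := PiLp.norm_apply_le _ p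
    _ ≤ ‖A‖ * ‖EuclideanSpace.single q (1 : ℝ)‖ := hcol ▸ A.l2_opNorm_mulVec _
    _ = specNorm A := by simp [specNorm_eq_l2_opNorm]

theorem specNorm_mul_le {m n l : ℕ} (A : Matrix (Fin m) (Fin n) ℝ) (B : Matrix (Fin n) (Fin l) ℝ) :
    specNorm (A * B) ≤ specNorm A * specNorm B :=
  l2_opNorm_mul A B

theorem Matrix.inv_sub_eq_one_sub_mul_mul_inv {ι R : Type*} [Fintype ι] [DecidableEq ι]
    [CommRing R] {A : Matrix ι ι R} (hA : IsUnit A) (B : Matrix ι ι R) :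
    A⁻¹ - B = (1 - B * A) * A⁻¹ := by
  rw [Matrix.sub_mul, one_mul, Matrix.mul_assoc,
    Matrix.mul_nonsing_inv _ ((isUnit_iff_isUnit_det A).mp hA), Matrix.mul_one]

theorem Matrix.BlockTriangular.inv_apply_eq_zero_of_lt {ι R : Type*} [Fintype ι] [DecidableEq ι]
    [LinearOrder ι] [CommRing R] {A : Matrix ι ι R} (hA : A.BlockTriangular id) (hunit : IsUnit A)
    {i j : ι} (hij : i < j) : A⁻¹ j i = 0 :=
  have : Invertible A := hunit.invertible
  blockTriangular_inv_of_blockTriangular hA hij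

/-- Strictly upper triangular entries of an invertible upper triangular
matrix are bounded by `‖R⁻¹ - Rᵀ‖ ≤ ‖I - RᵀR‖ ‖R⁻¹‖`. -/
theorem triangular_offdiag_bounds {n : ℕ} (R : Matrix (Fin n) (Fin n) ℝ)
    (htri : ∀ p q : Fin n, q < p → R p q = 0)
    (hR : IsUnit R) :
    ∀ i j : Fin n, i < j →
      |R i j| ≤ specNorm (R⁻¹ - Rᵀ) ∧
      specNorm (R⁻¹ - Rᵀ) ≤ specNorm (1 - Rᵀ * R) * specNorm R⁻¹ := by
  intro i j hij
  constructor
  · have hentry : (R⁻¹ - Rᵀ) j i = -R i j := by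
      simp [BlockTriangular.inv_apply_eq_zero_of_lt htri hR hij]
    simpa [hentry] using abs_apply_le_specNorm (R⁻¹ - Rᵀ) j i
  · rw [inv_sub_eq_one_sub_mul_mul_inv hR]
    exact specNorm_mul_le _ _
end

section
/- Let A, E ∈ ℝ^{n×n} be symmetric, let Z, δZ ∈ ℝ^{n×n} be such that P = Z + δZ is orthogonal, and let D ∈ ℝ^{n×n} be diagonal with A + E = P D Pᵀ. Then ‖Zᵀ A Z − D‖_F ≤ ‖A‖_F (2‖Z‖ + ‖δZ‖) ‖δZ‖ + ‖E‖_F. -/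
open Matrix

/-!
Because `P = Z + δZ` is orthogonal, `D = Pᵀ (A + E) P`, hence
`Zᵀ A Z - D = (Zᵀ A Z - Pᵀ A P) - Pᵀ E P`. The last term has Frobenius norm at most `‖E‖_F`
since `‖P‖ ≤ 1`, and `Zᵀ A Z - Pᵀ A P = -(Zᵀ A δZ + δZᵀ A P)` has Frobenius norm at most
`‖A‖_F ‖δZ‖ (‖Z‖ + ‖P‖) ≤ ‖A‖_F ‖δZ‖ (2‖Z‖ + ‖δZ‖)`, by `‖B C‖_F ≤ ‖B‖ ‖C‖_F`.
-/

section FrobeniusNorm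

attribute [local instance] Matrix.frobeniusNormedAddCommGroup

variable {m n : ℕ}

theorem frobNorm_eq_norm (A : Matrix (Fin m) (Fin n) ℝ) : frobNorm A = ‖A‖ := by
  simp [frobNorm, frobenius_norm_def, Real.sqrt_eq_rpow, sq_abs]

theorem frobNorm_nonneg (A : Matrix (Fin m) (Fin n) ℝ) : 0 ≤ frobNorm A := Real.sqrt_nonneg _

theorem frobNorm_sq (A : Matrix (Fin m) (Fin n) ℝ) : frobNorm A ^ 2 = ∑ p, ∑ q, A p q ^ 2 :=
  Real.sq_sqrt (by positivity)

theorem frobNorm_neg (A : Matrix (Fin m) (Fin n) ℝ) : frobNorm (-A) = frobNorm A := by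
  simp only [frobNorm_eq_norm, norm_neg]

theorem frobNorm_sub_le (A B : Matrix (Fin m) (Fin n) ℝ) :
    frobNorm (A - B) ≤ frobNorm A + frobNorm B := by
  simpa only [frobNorm_eq_norm] using norm_sub_le A B

theorem frobNorm_transpose (A : Matrix (Fin m) (Fin n) ℝ) : frobNorm Aᵀ = frobNorm A := by
  simp only [frobNorm_eq_norm, frobenius_norm_transpose]

end FrobeniusNorm

section SpectralNorm

open scoped Matrix.Norms.L2Operator

variable {m n : ℕ}

theorem specNorm_eq_norm (A : Matrix (Fin m) (Fin n) ℝ) : specNorm A = ‖A‖ := rfl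

theorem specNorm_nonneg (A : Matrix (Fin m) (Fin n) ℝ) : 0 ≤ specNorm A := norm_nonneg _

theorem specNorm_add_le (A B : Matrix (Fin m) (Fin n) ℝ) :
    specNorm (A + B) ≤ specNorm A + specNorm B := norm_add_le A B

theorem specNorm_transpose (A : Matrix (Fin m) (Fin n) ℝ) : specNorm Aᵀ = specNorm A := by
  simpa only [specNorm_eq_norm, conjTranspose_eq_transpose_of_trivial]
    using l2_opNorm_conjTranspose A

-- `‖1‖ = ‖1ᵀ * 1‖ = ‖1‖ ^ 2`; the value is `0` when `n = 0`.
theorem specNorm_one_le : specNorm (1 : Matrix (Fin n) (Fin n) ℝ) ≤ 1 := by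
  have h := l2_opNorm_conjTranspose_mul_self (1 : Matrix (Fin n) (Fin n) ℝ)
  rw [conjTranspose_one, mul_one] at h
  rw [specNorm_eq_norm]
  nlinarith [norm_nonneg (1 : Matrix (Fin n) (Fin n) ℝ)]

theorem specNorm_le_one_of_transpose_mul_self_eq_one (Q : Matrix (Fin m) (Fin n) ℝ)
    (hQ : Qᵀ * Q = 1) : specNorm Q ≤ 1 := by
  have h : specNorm Q * specNorm Q ≤ 1 := by
    simpa only [specNorm_eq_norm, ← l2_opNorm_conjTranspose_mul_self,
      conjTranspose_eq_transpose_of_trivial, hQ] using specNorm_one_le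
  nlinarith [specNorm_nonneg Q]

theorem sum_sq_mulVec_le (B : Matrix (Fin m) (Fin n) ℝ) (x : Fin n → ℝ) :
    ∑ p, (B *ᵥ x) p ^ 2 ≤ specNorm B ^ 2 * ∑ q, x q ^ 2 := by
  have h := pow_le_pow_left₀ (norm_nonneg _) (l2_opNorm_mulVec B (WithLp.toLp 2 x)) 2
  simpa only [specNorm_eq_norm, PiLp.continuousLinearEquiv_symm_apply,
    EuclideanSpace.real_norm_sq_eq, mul_pow] using h

end SpectralNorm

section MixedBounds

variable {k l m n : ℕ}

theorem frobNorm_mul_le_specNorm_mul_frobNorm (B : Matrix (Fin l) (Fin m) ℝ)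
    (C : Matrix (Fin m) (Fin n) ℝ) : frobNorm (B * C) ≤ specNorm B * frobNorm C := by
  refine le_of_pow_le_pow_left₀ two_ne_zero
    (mul_nonneg (specNorm_nonneg B) (frobNorm_nonneg C)) ?_
  calc frobNorm (B * C) ^ 2 = ∑ q, ∑ p, (B *ᵥ Cᵀ q) p ^ 2 := by
        rw [← frobNorm_transpose, frobNorm_sq]
        simp [mul_apply, mulVec, dotProduct]
    _ ≤ ∑ q, specNorm B ^ 2 * ∑ p, Cᵀ q p ^ 2 := by
        gcongr with q
        exact sum_sq_mulVec_le B _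
    _ = (specNorm B * frobNorm C) ^ 2 := by
        rw [mul_pow, ← Finset.mul_sum, ← frobNorm_sq, frobNorm_transpose]

theorem frobNorm_mul_le_frobNorm_mul_specNorm (C : Matrix (Fin l) (Fin m) ℝ)
    (B : Matrix (Fin m) (Fin n) ℝ) : frobNorm (C * B) ≤ frobNorm C * specNorm B := by
  rw [← frobNorm_transpose, transpose_mul, mul_comm, ← specNorm_transpose,
    ← frobNorm_transpose C]
  exact frobNorm_mul_le_specNorm_mul_frobNorm Bᵀ Cᵀ

theorem frobNorm_mul_mul_le (X : Matrix (Fin k) (Fin l) ℝ) (A : Matrix (Fin l) (Fin m) ℝ)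
    (Y : Matrix (Fin m) (Fin n) ℝ) :
    frobNorm (X * A * Y) ≤ specNorm X * frobNorm A * specNorm Y :=
  (frobNorm_mul_le_frobNorm_mul_specNorm _ Y).trans <|
    mul_le_mul_of_nonneg_right (frobNorm_mul_le_specNorm_mul_frobNorm X A) (specNorm_nonneg Y)

theorem frobNorm_transpose_mul_mul_le_of_transpose_mul_self_eq_one
    (E : Matrix (Fin m) (Fin m) ℝ) (P : Matrix (Fin m) (Fin n) ℝ) (hP : Pᵀ * P = 1) :
    frobNorm (Pᵀ * E * P) ≤ frobNorm E := by
  have hP₁ := specNorm_le_one_of_transpose_mul_self_eq_one P hP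
  have hP₂ : specNorm P * specNorm P ≤ 1 := mul_le_one₀ hP₁ (specNorm_nonneg P) hP₁
  calc frobNorm (Pᵀ * E * P) ≤ specNorm Pᵀ * frobNorm E * specNorm P :=
        frobNorm_mul_mul_le _ _ _
    _ ≤ frobNorm E := by
        rw [specNorm_transpose]
        nlinarith [frobNorm_nonneg E]

theorem frobNorm_transpose_mul_mul_sub_add_le (A : Matrix (Fin m) (Fin m) ℝ)
    (Z δZ : Matrix (Fin m) (Fin n) ℝ) :
    frobNorm (Zᵀ * A * Z - (Z + δZ)ᵀ * A * (Z + δZ)) ≤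
      frobNorm A * (2 * specNorm Z + specNorm δZ) * specNorm δZ := by
  have hsplit : Zᵀ * A * Z - (Z + δZ)ᵀ * A * (Z + δZ) =
      -(Zᵀ * A * δZ) - δZᵀ * A * (Z + δZ) := by
    simp only [transpose_add, Matrix.add_mul, Matrix.mul_add]
    abel
  have hZ := frobNorm_mul_mul_le Zᵀ A δZ
  have hδZ := frobNorm_mul_mul_le δZᵀ A (Z + δZ)
  rw [specNorm_transpose] at hZ hδZ
  calc _ ≤ frobNorm (Zᵀ * A * δZ) + frobNorm (δZᵀ * A * (Z + δZ)) := by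
        rw [hsplit, ← frobNorm_neg (Zᵀ * A * δZ)]
        exact frobNorm_sub_le _ _
    _ ≤ specNorm Z * frobNorm A * specNorm δZ +
          specNorm δZ * frobNorm A * (specNorm Z + specNorm δZ) := by
        refine add_le_add hZ (hδZ.trans ?_)
        exact mul_le_mul_of_nonneg_left (specNorm_add_le Z δZ)
          (mul_nonneg (specNorm_nonneg δZ) (frobNorm_nonneg A))
    _ = frobNorm A * (2 * specNorm Z + specNorm δZ) * specNorm δZ := by ring

end MixedBounds

theorem ZAZ_minus_D_bound_general {n : ℕ} (A E Z δZ D : Matrix (Fin n) (Fin n) ℝ)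
    (horth : (Z + δZ)ᵀ * (Z + δZ) = 1)
    (hfac : A + E = (Z + δZ) * D * (Z + δZ)ᵀ) :
    frobNorm (Zᵀ * A * Z - D) ≤
      frobNorm A * (2 * specNorm Z + specNorm δZ) * specNorm δZ + frobNorm E := by
  set P := Z + δZ
  have hD : D = Pᵀ * A * P + Pᵀ * E * P :=
    calc D = (Pᵀ * P) * D * (Pᵀ * P) := by rw [horth, one_mul, mul_one]
      _ = Pᵀ * (A + E) * P := by rw [hfac]; noncomm_ring
      _ = Pᵀ * A * P + Pᵀ * E * P := by noncomm_ring
  calc frobNorm (Zᵀ * A * Z - D) = frobNorm ((Zᵀ * A * Z - Pᵀ * A * P) - Pᵀ * E * P) := by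
        rw [hD, sub_add_eq_sub_sub]
    _ ≤ frobNorm (Zᵀ * A * Z - Pᵀ * A * P) + frobNorm (Pᵀ * E * P) := frobNorm_sub_le _ _
    _ ≤ _ := add_le_add (frobNorm_transpose_mul_mul_sub_add_le A Z δZ)
        (frobNorm_transpose_mul_mul_le_of_transpose_mul_self_eq_one E P horth)

/-- Bound on `‖Zᵀ A Z - D‖_F` for a nearly exact eigendecomposition. -/
theorem ZAZ_minus_D_bound {n : ℕ} (A E Z δZ D : Matrix (Fin n) (Fin n) ℝ)
    (hA : Aᵀ = A) (hE : Eᵀ = E)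
    (horth : (Z + δZ)ᵀ * (Z + δZ) = 1)
    (hD : D.IsDiag)
    (hfac : A + E = (Z + δZ) * D * (Z + δZ)ᵀ) :
    frobNorm (Zᵀ * A * Z - D) ≤
      frobNorm A * (2 * specNorm Z + specNorm δZ) * specNorm δZ + frobNorm E :=
  ZAZ_minus_D_bound_general A E Z δZ D horth hfac
end
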